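/- Let n, k, j be integers with 0 ≤ j ≤ k − 1, k ≥ 1, and n ≥ 2k + 1, and let X, compatibility, sgn, b, v, w_∘, w_• be as defined from these parameters. Let β = sqrt(2^j·binom(n−2j, k−j)) and define v_∼ ∈ ℝ^X by: v_∼(x) = sgn(x)·(k−j)/(β·sqrt((k−j)(n−k−j))) if x is compatible and b ∉ x; v_∼(x) = −sgn(x)·(n−k−j)/(β·sqrt((k−j)(n−k−j))) if x is compatible and b ∈ x; and v_∼(x) = 0 otherwise. Then v_∼ is a unit vector, ⟨v, v_∼⟩ = 0, and v_∼ = sqrt((k−j)/(n−2j))·w_∘ − sqrt((n−k−j)/(n−2j))·w_•. -/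

import Mathlib

open scoped RealInnerProductSpace

/-- The family `X` of all `k`-element subsets of `{1, …, n}`. -/
abbrev SetFamily (n k : ℕ) := {x : Finset ℕ // x ∈ Finset.powersetCard k (Finset.Icc 1 n)}

/-- `x` is compatible if for every `i ∈ {1,…,j}` it contains exactly one of
`p_i = n−2i+2` and `q_i = n−2i+1`. -/
abbrev IsCompatible (n j : ℕ) (x : Finset ℕ) : Prop :=
  ∀ i ∈ Finset.Icc 1 j,
    (n - 2*i + 2 ∈ x ∧ n - 2*i + 1 ∉ x) ∨ (n - 2*i + 1 ∈ x ∧ n - 2*i + 2 ∉ x)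

/-- `sgn(x) = (−1)^{#{i ∈ {1,…,j} : q_i ∈ x}}` where `q_i = n−2i+1`. -/
noncomputable def sgn (n j : ℕ) (x : Finset ℕ) : ℝ :=
  (-1) ^ ((Finset.Icc 1 j).filter (fun i => n - 2*i + 1 ∈ x)).card

/-- The vector `v ∈ ℝ^X`: `v(x) = sgn(x)/sqrt(2^j·C(n−2j, k−j))` if `x` is compatible,
else `0`. -/
noncomputable def vVec (n k j : ℕ) : EuclideanSpace ℝ (SetFamily n k) :=
  (WithLp.equiv 2 _).symm fun x =>
    if IsCompatible n j x.1 then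
      sgn n j x.1 / Real.sqrt (2 ^ j * ((n - 2*j).choose (k - j) : ℝ))
    else 0

/-- The vector `w_∘ ∈ ℝ^X`: `w_∘(x) = sgn(x)/sqrt(2^j·C(n−2j−1, k−j))` if `x` is
compatible and `b = n−2j ∉ x`, else `0`. -/
noncomputable def wOut (n k j : ℕ) : EuclideanSpace ℝ (SetFamily n k) :=
  (WithLp.equiv 2 _).symm fun x =>
    if IsCompatible n j x.1 ∧ n - 2*j ∉ x.1 then
      sgn n j x.1 / Real.sqrt (2 ^ j * ((n - 2*j - 1).choose (k - j) : ℝ))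
    else 0

/-- The vector `w_• ∈ ℝ^X`: `w_•(x) = sgn(x)/sqrt(2^j·C(n−2j−1, k−j−1))` if `x` is
compatible and `b = n−2j ∈ x`, else `0`. -/
noncomputable def wIn (n k j : ℕ) : EuclideanSpace ℝ (SetFamily n k) :=
  (WithLp.equiv 2 _).symm fun x =>
    if IsCompatible n j x.1 ∧ n - 2*j ∈ x.1 then
      sgn n j x.1 / Real.sqrt (2 ^ j * ((n - 2*j - 1).choose (k - j - 1) : ℝ))
    else 0

/-- The vector `v_∼ ∈ ℝ^X`, supported on compatible sets, with value
`sgn(x)·(k−j)/(β·sqrt((k−j)(n−k−j)))` when `b = n−2j ∉ x` and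
`−sgn(x)·(n−k−j)/(β·sqrt((k−j)(n−k−j)))` when `b ∈ x`,
where `β = sqrt(2^j·C(n−2j, k−j))`. -/
noncomputable def vSim (n k j : ℕ) : EuclideanSpace ℝ (SetFamily n k) :=
  (WithLp.equiv 2 _).symm fun x =>
    if IsCompatible n j x.1 then
      if n - 2*j ∉ x.1 then
        sgn n j x.1 * ((k : ℝ) - j) /
          (Real.sqrt (2 ^ j * ((n - 2*j).choose (k - j) : ℝ)) *
            Real.sqrt (((k : ℝ) - j) * ((n : ℝ) - k - j)))
      else
        -(sgn n j x.1 * ((n : ℝ) - k - j) /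
          (Real.sqrt (2 ^ j * ((n - 2*j).choose (k - j) : ℝ)) *
            Real.sqrt (((k : ℝ) - j) * ((n : ℝ) - k - j))))
    else 0

/-! A compatible `k`-set is a `(k−j)`-subset of `{1, …, n−2j}` together with one element from
each pair `{p_i, q_i}`, so there are `2^j·C(n−2j−1, k−j)` compatible sets avoiding `b` and
`2^j·C(n−2j−1, k−j−1)` containing it. Hence `w_∘` and `w_•` are unit vectors, and they are
orthogonal because their supports are disjoint. With `a = √((k−j)/(n−2j))` and
`c = √((n−k−j)/(n−2j))` one checks pointwise that `v_∼ = a w_∘ − c w_•` and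
`v = c w_∘ + a w_•`; as `a² + c² = 1`, `v_∼` is a unit vector orthogonal to `v`. -/

open Finset

theorem filter_notMem_powersetCard_Icc (m r : ℕ) :
    {y ∈ powersetCard r (Icc 1 m) | m ∉ y} = powersetCard r (Icc 1 (m - 1)) := by
  rcases Nat.eq_zero_or_pos m with rfl | hm
  · simp
  rw [← insert_Icc_sub_one_right_eq_Icc hm]
  ext y
  have : m ∉ Icc 1 (m - 1) := by rw [mem_Icc]; omega
  simp only [mem_filter, mem_powersetCard]
  constructor
  · rintro ⟨⟨hy, hc⟩, hmy⟩
    exact ⟨(subset_insert_iff_of_notMem hmy).1 hy, hc⟩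
  · rintro ⟨hy, hc⟩
    exact ⟨⟨hy.trans (subset_insert _ _), hc⟩, fun h => this (hy h)⟩

theorem card_filter_mem_powersetCard_Icc {m r : ℕ} (hm : 1 ≤ m) (hr : 1 ≤ r) :
    #{y ∈ powersetCard r (Icc 1 m) | m ∈ y} = (m - 1).choose (r - 1) := by
  have := card_filter_powersetCard_subset {m} (Icc 1 m) r (by simpa using hm) (by simpa using hr)
  simpa using this

theorem mem_inter_Icc_one_self {m : ℕ} (hm : 0 < m) (x : Finset ℕ) :
    m ∈ x ∩ Icc 1 m ↔ m ∈ x := by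
  simp only [mem_inter, mem_Icc, le_refl, and_true]
  exact and_iff_left hm

namespace IsCompatible

variable {n j k : ℕ}

def qIndices (n j : ℕ) (x : Finset ℕ) : Finset ℕ := {i ∈ Icc 1 j | n - 2 * i + 1 ∈ x}

def pairChoice (n : ℕ) (t : Finset ℕ) (i : ℕ) : ℕ :=
  if i ∈ t then n - 2 * i + 1 else n - 2 * i + 2

def pairSelection (n j : ℕ) (t : Finset ℕ) : Finset ℕ := (Icc 1 j).image (pairChoice n t)

theorem pairSelection_subset_Ioc (hjn : 2 * j ≤ n) (t : Finset ℕ) :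
    pairSelection n j t ⊆ Ioc (n - 2 * j) n := by
  intro e he
  obtain ⟨i, hi, rfl⟩ := mem_image.1 he
  simp only [mem_Icc] at hi
  simp only [pairChoice, mem_Ioc]
  split <;> omega

theorem card_pairSelection (hjn : 2 * j ≤ n) (t : Finset ℕ) : #(pairSelection n j t) = j := by
  rw [pairSelection, card_image_of_injOn, Nat.card_Icc, Nat.add_sub_cancel]
  intro a ha b hb hab
  simp only [coe_Icc, Set.mem_Icc] at ha hb
  simp only [pairChoice] at hab
  split_ifs at hab <;> omega

theorem q_mem_pairSelection_iff (hjn : 2 * j ≤ n) (t : Finset ℕ) {i : ℕ} (hi : i ∈ Icc 1 j) :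
    n - 2 * i + 1 ∈ pairSelection n j t ↔ i ∈ t := by
  simp only [pairSelection, mem_image, mem_Icc, pairChoice] at hi ⊢
  constructor
  · rintro ⟨i', hi', he⟩
    split_ifs at he with h'
    · rwa [show i = i' by omega]
    · omega
  · exact fun h => ⟨i, hi, if_pos h⟩

theorem p_mem_pairSelection_iff (hjn : 2 * j ≤ n) (t : Finset ℕ) {i : ℕ} (hi : i ∈ Icc 1 j) :
    n - 2 * i + 2 ∈ pairSelection n j t ↔ i ∉ t := by
  simp only [pairSelection, mem_image, mem_Icc, pairChoice] at hi ⊢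
  constructor
  · rintro ⟨i', hi', he⟩
    split_ifs at he with h'
    · omega
    · rwa [show i = i' by omega]
  · exact fun h => ⟨i, hi, if_neg h⟩

theorem notMem_of_subset_Icc {y : Finset ℕ} (hy : y ⊆ Icc 1 (n - 2 * j)) {e : ℕ}
    (he : n - 2 * j < e) : e ∉ y := fun h => by
  have := mem_Icc.1 (hy h); omega

theorem union_pairSelection (hjn : 2 * j ≤ n) {y : Finset ℕ} (hy : y ⊆ Icc 1 (n - 2 * j))
    (t : Finset ℕ) : IsCompatible n j (y ∪ pairSelection n j t) := by
  intro i hi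
  have hi' := mem_Icc.1 hi
  have hq : n - 2 * i + 1 ∉ y := notMem_of_subset_Icc hy (by omega)
  have hp : n - 2 * i + 2 ∉ y := notMem_of_subset_Icc hy (by omega)
  simp only [mem_union, hq, hp, false_or, q_mem_pairSelection_iff hjn t hi,
    p_mem_pairSelection_iff hjn t hi]
  tauto

theorem qIndices_union_pairSelection (hjn : 2 * j ≤ n) {y t : Finset ℕ}
    (hy : y ⊆ Icc 1 (n - 2 * j)) (ht : t ⊆ Icc 1 j) :
    qIndices n j (y ∪ pairSelection n j t) = t := by
  ext i
  simp only [qIndices, mem_filter, mem_union]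
  constructor
  · rintro ⟨hi, hq | hq⟩
    · exact absurd hq (notMem_of_subset_Icc hy (by have := mem_Icc.1 hi; omega))
    · exact (q_mem_pairSelection_iff hjn t hi).1 hq
  · intro hit
    exact ⟨ht hit, Or.inr ((q_mem_pairSelection_iff hjn t (ht hit)).2 hit)⟩

theorem union_pairSelection_inter_Icc (hjn : 2 * j ≤ n) {y : Finset ℕ}
    (hy : y ⊆ Icc 1 (n - 2 * j)) (t : Finset ℕ) :
    (y ∪ pairSelection n j t) ∩ Icc 1 (n - 2 * j) = y := by
  rw [union_inter_distrib_right, inter_eq_left.2 hy, union_eq_left]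
  intro e he
  have := mem_Ioc.1 (pairSelection_subset_Ioc hjn t (mem_inter.1 he).1)
  have := mem_Icc.1 (mem_inter.1 he).2
  omega

theorem inter_Icc_union_pairSelection (hjn : 2 * j ≤ n) {x : Finset ℕ}
    (hx : x ⊆ Icc 1 n) (hc : IsCompatible n j x) :
    x ∩ Icc 1 (n - 2 * j) ∪ pairSelection n j (qIndices n j x) = x := by
  ext e
  rw [mem_union, mem_inter]
  rcases le_or_gt e (n - 2 * j) with he | he
  · have : e ∉ pairSelection n j (qIndices n j x) := fun h => by
      have := mem_Ioc.1 (pairSelection_subset_Ioc hjn _ h); omega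
    constructor
    · rintro (h | h)
      · exact h.1
      · exact absurd h this
    · intro h; exact Or.inl ⟨h, mem_Icc.2 ⟨(mem_Icc.1 (hx h)).1, he⟩⟩
  rw [or_iff_right (fun h => by have := mem_Icc.1 h.2; omega)]
  by_cases hen : n < e
  · have h1 : e ∉ x := fun h => by have := mem_Icc.1 (hx h); omega
    have h2 : e ∉ pairSelection n j (qIndices n j x) := fun h => by
      have := mem_Ioc.1 (pairSelection_subset_Ioc hjn _ h); omega
    simp only [h1, h2]
  obtain ⟨i, hi, rfl | rfl⟩ : ∃ i ∈ Icc 1 j, e = n - 2 * i + 1 ∨ e = n - 2 * i + 2 :=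
    ⟨(n - e) / 2 + 1, mem_Icc.2 ⟨by omega, by omega⟩, by omega⟩
  · simp [q_mem_pairSelection_iff hjn _ hi, qIndices, hi]
  · rw [p_mem_pairSelection_iff hjn _ hi]
    simp only [qIndices, mem_filter, hi, true_and]
    rcases hc i hi with h | h <;> simp [h]

theorem card_filter_powersetCard (hjn : 2 * j ≤ n) (hjk : j ≤ k)
    (Q : Finset ℕ → Prop) [DecidablePred Q] :
    #{x ∈ powersetCard k (Icc 1 n) | IsCompatible n j x ∧ Q (x ∩ Icc 1 (n - 2 * j))}
      = #{y ∈ powersetCard (k - j) (Icc 1 (n - 2 * j)) | Q y} * 2 ^ j := by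
  have hdisj {y : Finset ℕ} (hy : y ⊆ Icc 1 (n - 2 * j)) (t : Finset ℕ) :
      Disjoint y (pairSelection n j t) :=
    disjoint_right.2 fun _ he =>
      notMem_of_subset_Icc hy (mem_Ioc.1 (pairSelection_subset_Ioc hjn t he)).1
  calc #{x ∈ powersetCard k (Icc 1 n) | IsCompatible n j x ∧ Q (x ∩ Icc 1 (n - 2 * j))}
      = #({y ∈ powersetCard (k - j) (Icc 1 (n - 2 * j)) | Q y} ×ˢ (Icc 1 j).powerset) := by
        refine card_nbij' (fun x => (x ∩ Icc 1 (n - 2 * j), qIndices n j x))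
          (fun p => p.1 ∪ pairSelection n j p.2) ?_ ?_ ?_ ?_ <;>
          simp only [Set.MapsTo, Set.LeftInvOn, Set.RightInvOn, mem_coe,
            mem_filter, mem_product, mem_powersetCard, mem_powerset, and_imp, Prod.forall]
        · intro x hxs hxk hc hQ
          have hcard := congrArg card (inter_Icc_union_pairSelection hjn hxs hc)
          rw [card_union_of_disjoint (hdisj inter_subset_right _), card_pairSelection hjn] at hcard
          exact ⟨⟨⟨inter_subset_right, by omega⟩, hQ⟩, filter_subset _ _⟩
        · intro y t hy hyk hQ ht
          refine ⟨⟨union_subset (hy.trans (Icc_subset_Icc_right (by omega))) ?_, ?_⟩,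
            union_pairSelection hjn hy t, by rwa [union_pairSelection_inter_Icc hjn hy]⟩
          · exact (pairSelection_subset_Ioc hjn t).trans fun e he => by
              have := mem_Ioc.1 he; exact mem_Icc.2 ⟨by omega, this.2⟩
          · rw [card_union_of_disjoint (hdisj hy t), hyk, card_pairSelection hjn]; omega
        · intro x hxs _ hc _
          exact inter_Icc_union_pairSelection hjn hxs hc
        · intro y t hy _ _ ht
          rw [union_pairSelection_inter_Icc hjn hy, qIndices_union_pairSelection hjn hy ht]
    _ = #{y ∈ powersetCard (k - j) (Icc 1 (n - 2 * j)) | Q y} * 2 ^ j := by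
        rw [card_product, card_powerset, Nat.card_Icc, Nat.add_sub_cancel]

theorem card_filter_notMem (hjk : j ≤ k) (hjn : 2 * j < n) :
    #{x ∈ powersetCard k (Icc 1 n) | IsCompatible n j x ∧ n - 2 * j ∉ x}
      = (n - 2 * j - 1).choose (k - j) * 2 ^ j := by
  have hcount := card_filter_powersetCard hjn.le hjk (n - 2 * j ∉ ·)
  simp only [mem_inter_Icc_one_self (Nat.sub_pos_of_lt hjn)] at hcount
  rw [hcount, filter_notMem_powersetCard_Icc, card_powersetCard, Nat.card_Icc,
    Nat.add_sub_cancel]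

theorem card_filter_mem (hjk : j < k) (hjn : 2 * j < n) :
    #{x ∈ powersetCard k (Icc 1 n) | IsCompatible n j x ∧ n - 2 * j ∈ x}
      = (n - 2 * j - 1).choose (k - j - 1) * 2 ^ j := by
  have hcount := card_filter_powersetCard hjn.le hjk.le (n - 2 * j ∈ ·)
  simp only [mem_inter_Icc_one_self (Nat.sub_pos_of_lt hjn)] at hcount
  rw [hcount, card_filter_mem_powersetCard_Icc (by omega) (by omega)]

end IsCompatible

theorem sgn_sq (n j : ℕ) (x : Finset ℕ) : sgn n j x ^ 2 = 1 := by
  rw [sgn, ← pow_mul, pow_mul', neg_one_sq, one_pow]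

theorem card_filter_setFamily (n k : ℕ) (p : Finset ℕ → Prop) [DecidablePred p] :
    #{x : SetFamily n k | p x.1} = #{x ∈ powersetCard k (Icc 1 n) | p x} := by
  rw [card_filter, card_filter, ← sum_coe_sort (powersetCard k (Icc 1 n))]

theorem EuclideanSpace.norm_sq_eq_card_mul {ι : Type*} [Fintype ι] (f : EuclideanSpace ℝ ι)
    (p : ι → Prop) [DecidablePred p] (c : ℝ) (hf : ∀ x, f x ^ 2 = if p x then c else 0) :
    ‖f‖ ^ 2 = #{x | p x} * c := by
  simp only [EuclideanSpace.norm_sq_eq, Real.norm_eq_abs, sq_abs, hf, sum_ite, sum_const_zero,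
    add_zero, sum_const, nsmul_eq_mul]

theorem EuclideanSpace.inner_eq_zero_of_mul_eq_zero {ι : Type*} [Fintype ι]
    {f g : EuclideanSpace ℝ ι} (h : ∀ x, f x * g x = 0) : ⟪f, g⟫ = 0 := by
  simp [PiLp.inner_apply, mul_comm, h]

variable {n k j : ℕ}

theorem norm_eq_one_of_apply_eq_sgn_div {f : EuclideanSpace ℝ (SetFamily n k)}
    {p : Finset ℕ → Prop} [DecidablePred p] {c : ℝ}
    (hc : #{x ∈ powersetCard k (Icc 1 n) | IsCompatible n j x ∧ p x} = c) (hc0 : 0 < c)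
    (hf : ∀ x, f x = if IsCompatible n j x.1 ∧ p x.1 then sgn n j x.1 / √c else 0) :
    ‖f‖ = 1 := by
  refine (pow_eq_one_iff_of_nonneg (norm_nonneg _) two_ne_zero).1 ?_
  rw [EuclideanSpace.norm_sq_eq_card_mul f (fun x => IsCompatible n j x.1 ∧ p x.1) c⁻¹,
    card_filter_setFamily n k (fun x => IsCompatible n j x ∧ p x), hc, mul_inv_cancel₀ hc0.ne']
  intro x
  rw [hf]
  split_ifs
  · rw [div_pow, sgn_sq, Real.sq_sqrt hc0.le, one_div]
  · rw [zero_pow two_ne_zero]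

theorem norm_wOut (hjk : j ≤ k) (hkn : k + j < n) : ‖wOut n k j‖ = 1 := by
  have hC : 0 < (n - 2 * j - 1).choose (k - j) := Nat.choose_pos (by omega)
  refine norm_eq_one_of_apply_eq_sgn_div (p := (n - 2 * j ∉ ·)) ?_ (by positivity) fun _ => rfl
  rw [IsCompatible.card_filter_notMem hjk (by omega)]
  push_cast
  ring

theorem norm_wIn (hjk : j < k) (hkn : k + j ≤ n) : ‖wIn n k j‖ = 1 := by
  have hC : 0 < (n - 2 * j - 1).choose (k - j - 1) := Nat.choose_pos (by omega)
  refine norm_eq_one_of_apply_eq_sgn_div (p := (n - 2 * j ∈ ·)) ?_ (by positivity) fun _ => rfl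
  rw [IsCompatible.card_filter_mem hjk (by omega)]
  push_cast
  ring

theorem inner_wOut_wIn : ⟪wOut n k j, wIn n k j⟫ = 0 := by
  refine EuclideanSpace.inner_eq_zero_of_mul_eq_zero fun x => ?_
  simp only [wOut, wIn, WithLp.equiv_symm_apply, PiLp.toLp_apply]
  split_ifs with h1 h2 <;> first | exact absurd h2.2 h1.2 | simp

theorem Nat.cast_choose_sub_one {m r : ℕ} (hm : 0 < m) (hrm : r ≤ m) :
    ((m - 1).choose r : ℝ) = m.choose r * ((m - r : ℝ) / m) := by
  obtain ⟨m, rfl⟩ : ∃ m', m = m' + 1 := ⟨m - 1, by omega⟩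
  have h := Nat.choose_mul_succ_eq m r
  rw [← Nat.cast_inj (R := ℝ), Nat.cast_mul, Nat.cast_mul, Nat.cast_sub hrm] at h
  rw [Nat.add_sub_cancel]
  field_simp
  linear_combination h

theorem Nat.cast_choose_sub_one_sub_one {m r : ℕ} (hm : 0 < m) (hr : 0 < r) :
    ((m - 1).choose (r - 1) : ℝ) = m.choose r * (r / m) := by
  obtain ⟨m, rfl⟩ : ∃ m', m = m' + 1 := ⟨m - 1, by omega⟩
  obtain ⟨r, rfl⟩ : ∃ r', r = r' + 1 := ⟨r - 1, by omega⟩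
  have h := Nat.add_one_mul_choose_eq m r
  rw [Nat.add_sub_cancel, Nat.add_sub_cancel]
  field_simp
  exact_mod_cast (mul_comm _ _).trans h

theorem cast_choose_sub_two_mul_sub_one (hjk : j < k) (hkn : k + j < n) :
    ((n - 2 * j - 1).choose (k - j) : ℝ)
      = (n - 2 * j).choose (k - j) * (((n : ℝ) - k - j) / (n - 2 * j)) := by
  rw [Nat.cast_choose_sub_one (by omega) (by omega),
    Nat.cast_sub (by omega : 2 * j ≤ n), Nat.cast_sub hjk.le]
  push_cast
  ring_nf

theorem cast_choose_sub_two_mul_sub_one_sub_one (hjk : j < k) (hkn : k + j < n) :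
    ((n - 2 * j - 1).choose (k - j - 1) : ℝ)
      = (n - 2 * j).choose (k - j) * (((k : ℝ) - j) / (n - 2 * j)) := by
  rw [Nat.cast_choose_sub_one_sub_one (by omega) (by omega), Nat.cast_sub (by omega : 2 * j ≤ n),
    Nat.cast_sub hjk.le]
  push_cast
  ring_nf

theorem cast_sub_pos_and_lt (hjk : j < k) (hkn : k + j < n) :
    (0 : ℝ) < k - j ∧ (k : ℝ) - j < n - 2 * j := by
  have hjk : (j : ℝ) < k := by exact_mod_cast hjk
  have hkn : (k : ℝ) + j < n := by exact_mod_cast hkn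
  constructor <;> linarith

theorem vSim_eq_sub (hjk : j < k) (hkn : k + j < n) :
    vSim n k j = √(((k : ℝ) - j) / ((n : ℝ) - 2 * j)) • wOut n k j
      - √(((n : ℝ) - k - j) / ((n : ℝ) - 2 * j)) • wIn n k j := by
  obtain ⟨hr, hrm⟩ := cast_sub_pos_and_lt hjk hkn
  have hB : (0 : ℝ) < 2 ^ j * (n - 2 * j).choose (k - j) := by
    have := Nat.choose_pos (by omega : k - j ≤ n - 2 * j)
    positivity
  ext x
  simp only [vSim, wOut, wIn, WithLp.equiv_symm_apply, PiLp.toLp_apply, PiLp.sub_apply,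
    PiLp.smul_apply, smul_eq_mul, cast_choose_sub_two_mul_sub_one hjk hkn,
    cast_choose_sub_two_mul_sub_one_sub_one hjk hkn, ← mul_assoc,
    show (n : ℝ) - k - j = (n - 2 * j) - (k - j) by ring]
  generalize (k : ℝ) - j = r at *
  generalize (n : ℝ) - 2 * j = m at *
  generalize (2 : ℝ) ^ j * (n - 2 * j).choose (k - j) = B at *
  have hm : 0 < m := hr.trans hrm
  have hmr : 0 < m - r := sub_pos.2 hrm
  rw [Real.sqrt_mul hB.le, Real.sqrt_mul hB.le, Real.sqrt_mul hr.le, Real.sqrt_div' _ hm.le,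
    Real.sqrt_div' _ hm.le]
  by_cases hc : IsCompatible n j x.1
  · by_cases hb : n - 2 * j ∈ x.1
    · simp only [eq_true hc, hb, true_and, not_true, if_true, if_false, mul_zero, zero_sub]
      field_simp
      rw [Real.sq_sqrt hmr.le]
    · simp only [eq_true hc, hb, true_and, not_false_eq_true, if_true, if_false, mul_zero,
        sub_zero]
      field_simp
      rw [Real.sq_sqrt hr.le]
  · simp [hc]

theorem vVec_eq_add (hjk : j < k) (hkn : k + j < n) :
    vVec n k j = √(((n : ℝ) - k - j) / ((n : ℝ) - 2 * j)) • wOut n k j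
      + √(((k : ℝ) - j) / ((n : ℝ) - 2 * j)) • wIn n k j := by
  obtain ⟨hr, hrm⟩ := cast_sub_pos_and_lt hjk hkn
  have hB : (0 : ℝ) < 2 ^ j * (n - 2 * j).choose (k - j) := by
    have := Nat.choose_pos (by omega : k - j ≤ n - 2 * j)
    positivity
  ext x
  simp only [vVec, wOut, wIn, WithLp.equiv_symm_apply, PiLp.toLp_apply, PiLp.add_apply,
    PiLp.smul_apply, smul_eq_mul, cast_choose_sub_two_mul_sub_one hjk hkn,
    cast_choose_sub_two_mul_sub_one_sub_one hjk hkn, ← mul_assoc,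
    show (n : ℝ) - k - j = (n - 2 * j) - (k - j) by ring]
  generalize (k : ℝ) - j = r at *
  generalize (n : ℝ) - 2 * j = m at *
  generalize (2 : ℝ) ^ j * (n - 2 * j).choose (k - j) = B at *
  have hm : 0 < m := hr.trans hrm
  have hmr : 0 < m - r := sub_pos.2 hrm
  rw [Real.sqrt_mul hB.le, Real.sqrt_mul hB.le, Real.sqrt_div' _ hm.le, Real.sqrt_div' _ hm.le]
  by_cases hc : IsCompatible n j x.1
  · by_cases hb : n - 2 * j ∈ x.1
    · simp only [eq_true hc, hb, true_and, not_true, if_true, if_false, mul_zero, zero_add]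
      field_simp
    · simp only [eq_true hc, hb, true_and, not_false_eq_true, if_true, if_false, mul_zero,
        add_zero]
      field_simp
  · simp [hc]

section Rotation

variable {E : Type*} [NormedAddCommGroup E] [InnerProductSpace ℝ E] {u w : E}

theorem norm_smul_sub_smul_sq (hu : ‖u‖ = 1) (hw : ‖w‖ = 1) (huw : ⟪u, w⟫ = 0) (a c : ℝ) :
    ‖a • u - c • w‖ ^ 2 = a ^ 2 + c ^ 2 := by
  rw [norm_sub_sq_real, norm_smul, norm_smul, real_inner_smul_left, real_inner_smul_right, huw,
    hu, hw, Real.norm_eq_abs, Real.norm_eq_abs]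
  simp [sq_abs]

theorem inner_smul_add_smul_smul_sub_smul (hnorm : ‖u‖ = ‖w‖) (huw : ⟪u, w⟫ = 0) (a c : ℝ) :
    ⟪c • u + a • w, a • u - c • w⟫ = 0 := by
  simp only [inner_add_left, inner_sub_right, real_inner_smul_left, real_inner_smul_right,
    real_inner_self_eq_norm_sq, huw, real_inner_comm u w, hnorm]
  ring

end Rotation

/-- `v_∼` is a unit vector orthogonal to `v`, and
`v_∼ = sqrt((k−j)/(n−2j))·w_∘ − sqrt((n−k−j)/(n−2j))·w_•`. -/
theorem vSim_decomposition (n k j : ℕ) (hk : 1 ≤ k) (hj : j ≤ k - 1) (hn : 2 * k + 1 ≤ n) :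
    ‖vSim n k j‖ = 1 ∧ ⟪vVec n k j, vSim n k j⟫ = 0 ∧
    vSim n k j
      = Real.sqrt (((k : ℝ) - j) / ((n : ℝ) - 2 * j)) • wOut n k j
        - Real.sqrt (((n : ℝ) - k - j) / ((n : ℝ) - 2 * j)) • wIn n k j := by
  have hjk : j < k := by omega
  have hkn : k + j < n := by omega
  have hOut := norm_wOut hjk.le hkn
  have hIn := norm_wIn hjk hkn.le
  have hSim := vSim_eq_sub hjk hkn
  refine ⟨?_, ?_, hSim⟩
  · obtain ⟨hr, hrm⟩ := cast_sub_pos_and_lt hjk hkn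
    refine (pow_eq_one_iff_of_nonneg (norm_nonneg _) two_ne_zero).1 ?_
    rw [hSim, norm_smul_sub_smul_sq hOut hIn inner_wOut_wIn,
      Real.sq_sqrt (div_nonneg (by linarith) (by linarith)),
      Real.sq_sqrt (div_nonneg (by linarith) (by linarith)), ← add_div,
      div_eq_one_iff_eq (by linarith)]
    ring
  · rw [vVec_eq_add hjk hkn, hSim]
    exact inner_smul_add_smul_smul_sub_smul (hOut.trans hIn.symm) inner_wOut_wIn _ _
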